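/- Let X be a simplicial complex and let σ ∈ X be a face. Then C(lk(X, σ)) ≤ C(X). -/

import Mathlib

namespace PaperKL

open Finset

variable {V : Type*}

section Complexes
variable [DecidableEq V]

/-- A (finite) abstract simplicial complex: a family of finite sets closed under
taking subsets. -/
def IsSimplicialComplex (X : Finset (Finset V)) : Prop :=
  ∀ σ ∈ X, ∀ τ ⊆ σ, τ ∈ X

/-- `σ` is a free face of `X`, with `τ` the unique maximal face of `X` containing it:
equivalently, every face of `X` containing `σ` is contained in `τ`. -/
def IsFreeFace (X : Finset (Finset V)) (σ τ : Finset V) : Prop :=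
  σ ∈ X ∧ τ ∈ X ∧ σ ⊆ τ ∧ ∀ η ∈ X, σ ⊆ η → η ⊆ τ

/-- `Y` is obtained from `X` by an elementary `d`-collapse. -/
def ElemCollapse (d : ℕ) (X Y : Finset (Finset V)) : Prop :=
  ∃ σ τ : Finset V, IsFreeFace X σ τ ∧ σ.card ≤ d ∧
    Y = X.filter fun η => ¬(σ ⊆ η ∧ η ⊆ τ)

/-- `X` is `d`-collapsible: some sequence of elementary `d`-collapses reduces `X`
to the void complex `∅`. -/
def Collapsible (d : ℕ) (X : Finset (Finset V)) : Prop :=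
  Relation.ReflTransGen (ElemCollapse d) X ∅

/-- The collapsibility number `C(X)`: the minimum `d` such that `X` is `d`-collapsible. -/
noncomputable def collapseNum (X : Finset (Finset V)) : ℕ :=
  sInf {d | Collapsible d X}

/-- The link `lk(X, τ) = {η ∈ X : η ∩ τ = ∅, η ∪ τ ∈ X}`. -/
def link (X : Finset (Finset V)) (τ : Finset V) : Finset (Finset V) :=
  X.filter fun η => η ∩ τ = ∅ ∧ η ∪ τ ∈ X

/-- Deletion of a vertex: `X \ v`. -/
def deleteVert (X : Finset (Finset V)) (v : V) : Finset (Finset V) :=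
  X.filter fun σ => v ∉ σ

/-- The induced subcomplex on the complement of `S`: `X[V \ S]`. -/
def deleteSet (X : Finset (Finset V)) (S : Finset V) : Finset (Finset V) :=
  X.filter fun σ => σ ∩ S = ∅

/-- The vertex set of a complex: the union of its faces. -/
def vertexSet (X : Finset (Finset V)) : Finset V := X.sup id

/-- The join `X ∗ Y = {σ ∪ τ : σ ∈ X, τ ∈ Y}`. -/
def joinSC (X Y : Finset (Finset V)) : Finset (Finset V) :=
  (X ×ˢ Y).image fun p => p.1 ∪ p.2

/-- `τ` is a maximal face of `X`. -/
def IsMaximalFace (X : Finset (Finset V)) (τ : Finset V) : Prop :=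
  τ ∈ X ∧ ∀ η ∈ X, τ ⊆ η → η = τ

/-- `X` is a cone over `v`: every maximal face of `X` contains `v`. -/
def IsConeOver (X : Finset (Finset V)) (v : V) : Prop :=
  ∀ τ, IsMaximalFace X τ → v ∈ τ

/-- A missing face of `X`: a subset of the vertex set which is not a face,
all of whose proper subsets are faces. -/
def IsMissingFace (X : Finset (Finset V)) (τ : Finset V) : Prop :=
  τ ⊆ vertexSet X ∧ τ ∉ X ∧ ∀ σ ⊂ τ, σ ∈ X

end Complexes

/-- A finset is an independent set in the graph `G`. -/
def IsIndepSet (G : SimpleGraph V) (s : Finset V) : Prop :=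
  ∀ u ∈ s, ∀ v ∈ s, ¬ G.Adj u v

section Graphs
variable [DecidableEq V]

/-- The complex `I_n(G[W])` of the induced subgraph `G[W]`, realized as the family of
subsets `U ⊆ W` such that `U` contains no independent set of `G` of size `n`. -/
noncomputable def indComplexOn (G : SimpleGraph V) (W : Finset V) (n : ℕ) :
    Finset (Finset V) :=
  @Finset.filter _ (fun U => ¬ ∃ I ⊆ U, I.card = n ∧ IsIndepSet G I)
    (Classical.decPred _) W.powerset

variable [Fintype V]

/-- The complex `I_n(G)`: subsets of `V` containing no independent set of size `n`. -/
noncomputable def indComplex (G : SimpleGraph V) (n : ℕ) : Finset (Finset V) :=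
  indComplexOn G Finset.univ n

/-- The open neighborhood of `v` as a finset. -/
noncomputable def nbrsFinset (G : SimpleGraph V) (v : V) : Finset V :=
  @Finset.filter _ (fun u => G.Adj v u) (Classical.decPred _) Finset.univ

/-- Filter of a finset by an arbitrary predicate (classical decidability). -/
noncomputable def cfilter (p : V → Prop) (s : Finset V) : Finset V :=
  @Finset.filter _ p (Classical.decPred _) s

end Graphs

/-- `G` has maximum degree at most `Δ`. -/
def MaxDegLE (G : SimpleGraph V) (Δ : ℕ) : Prop :=
  ∀ v : V, (G.neighborSet v).ncard ≤ Δ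

/-- `G` is claw-free: it has no induced subgraph isomorphic to `K_{1,3}`. -/
def ClawFree (G : SimpleGraph V) : Prop :=
  ¬ ∃ a b c d : V, b ≠ c ∧ b ≠ d ∧ c ≠ d ∧
    G.Adj a b ∧ G.Adj a c ∧ G.Adj a d ∧ ¬G.Adj b c ∧ ¬G.Adj b d ∧ ¬G.Adj c d

/-- `G` is chordal: it has no induced cycle of length at least 4. -/
def IsChordal (G : SimpleGraph V) : Prop :=
  ∀ m : ℕ, 4 ≤ m → ¬ ∃ f : ZMod m → V, Function.Injective f ∧
    ∀ i j : ZMod m, G.Adj (f i) (f j) ↔ (j = i + 1 ∨ i = j + 1)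

/-- `v` is a simplicial vertex of `G`: its closed neighborhood is a clique. -/
def IsSimplicialVertex (G : SimpleGraph V) (v : V) : Prop :=
  ∀ a b : V, G.Adj v a → G.Adj v b → a ≠ b → G.Adj a b

/-- The connected component of `v` in `G` is a path: its vertices can be enumerated
as `f 0, …, f m` with adjacency exactly between consecutive vertices. -/
def InPathComponent (G : SimpleGraph V) (v : V) : Prop :=
  ∃ (m : ℕ) (f : Fin (m + 1) → V), Function.Injective f ∧
    (∀ w, G.Reachable v w ↔ ∃ i, f i = w) ∧
    (∀ i j : Fin (m + 1), G.Adj (f i) (f j) ↔ ((i : ℕ) + 1 = (j : ℕ) ∨ (j : ℕ) + 1 = (i : ℕ)))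

/-- The collection `A 0, …, A (t-1)` of independent sets of `G` admits a rainbow
independent set of size `n`: there are indices `g 0 < ⋯ < g (n-1)` and distinct
vertices `a j ∈ A (g j)` forming an independent set of `G`. -/
def HasRainbowIndepSet [DecidableEq V] (G : SimpleGraph V) (n : ℕ) {t : ℕ} (A : Fin t → Finset V) : Prop :=
  ∃ (g : Fin n → Fin t) (a : Fin n → V), StrictMono g ∧ Function.Injective a ∧
    (∀ j, a j ∈ A (g j)) ∧ IsIndepSet G (Finset.image a Finset.univ)

section FGraphs
variable [DecidableEq V] [Fintype V]

/-- `f_G(n)`: the minimum `t` such that every collection of `t` independent sets of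
size `n` in `G` has a rainbow independent set of size `n`. -/
noncomputable def fRainbow (G : SimpleGraph V) (n : ℕ) : ℕ :=
  sInf {t | ∀ A : Fin t → Finset V,
    (∀ i, IsIndepSet G (A i) ∧ (A i).card = n) → HasRainbowIndepSet G n A}

/-- The independence number `α(G)`. -/
noncomputable def indepNum (G : SimpleGraph V) : ℕ :=
  (@Finset.filter _ (fun s => IsIndepSet G s) (Classical.decPred _)
    (Finset.univ : Finset V).powerset).sup Finset.card

end FGraphs


/-!
A collapse of the free face `σ₀ ⊆ τ₀` of `X` either leaves `lk(X, σ)` unchanged (when `σ ⊄ τ₀`)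
or restricts to the collapse of the free face `σ₀ \ σ ⊆ τ₀ \ σ` of `lk(X, σ)`, which is no larger.
Hence every sequence of elementary `d`-collapses of `X` induces one of `lk(X, σ)`.
The infimum defining `C(X)` is attained, since removing faces of maximum size one at a time
collapses any `X`.
-/

section Collapses
variable [DecidableEq V]

lemma collapsible_of_forall_card_le {d : ℕ} (X : Finset (Finset V))
    (hd : ∀ η ∈ X, η.card ≤ d) : Collapsible d X := by
  induction X using Finset.strongInduction with
  | H X ih =>
    obtain rfl | hne := X.eq_empty_or_nonempty
    · exact .refl
    obtain ⟨τ, hτX, hτmax⟩ := X.exists_max_image card hne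
    have hfree : IsFreeFace X τ τ := ⟨hτX, hτX, subset_rfl,
      fun η hη hτη => (eq_of_subset_of_card_le hτη (hτmax η hη)).ge⟩
    have herase : X.erase τ = X.filter fun η => ¬(τ ⊆ η ∧ η ⊆ τ) := by
      ext η
      simp only [mem_erase, mem_filter, ← subset_antisymm_iff, eq_comm (a := τ)]
      tauto
    exact .head ⟨τ, τ, hfree, hd τ hτX, herase⟩
      (ih _ (erase_ssubset hτX) fun η hη => hd η (mem_of_mem_erase hη))

lemma collapsible_collapseNum (X : Finset (Finset V)) : Collapsible (collapseNum X) X :=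
  Nat.sInf_mem (s := {d | Collapsible d X})
    ⟨_, collapsible_of_forall_card_le X fun _ hη => le_sup (f := card) hη⟩

lemma ElemCollapse.isSimplicialComplex {d : ℕ} {X Y : Finset (Finset V)}
    (h : ElemCollapse d X Y) (hX : IsSimplicialComplex X) : IsSimplicialComplex Y := by
  obtain ⟨σ₀, τ₀, ⟨-, -, -, hmax⟩, -, rfl⟩ := h
  simp only [IsSimplicialComplex, mem_filter]
  rintro η ⟨hηX, hη⟩ ζ hζη
  exact ⟨hX η hηX ζ hζη, fun ⟨hσ₀ζ, _⟩ => hη ⟨hσ₀ζ.trans hζη, hmax η hηX (hσ₀ζ.trans hζη)⟩⟩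

lemma IsFreeFace.link_sdiff {X : Finset (Finset V)} {σ₀ τ₀ σ : Finset V}
    (hX : IsSimplicialComplex X) (h : IsFreeFace X σ₀ τ₀) (hσ : σ ⊆ τ₀) :
    IsFreeFace (link X σ) (σ₀ \ σ) (τ₀ \ σ) := by
  obtain ⟨-, hτ₀, hσ₀τ₀, hmax⟩ := h
  have mem_link {η} (hη : η ⊆ τ₀) : η \ σ ∈ link X σ :=
    mem_filter.2 ⟨hX τ₀ hτ₀ _ (sdiff_subset.trans hη), sdiff_inter_self _ _,
      hX τ₀ hτ₀ _ (by rw [sdiff_union_self_eq_union]; exact union_subset hη hσ)⟩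
  refine ⟨mem_link hσ₀τ₀, mem_link subset_rfl, sdiff_subset_sdiff hσ₀τ₀ subset_rfl, ?_⟩
  intro η hη hσ₀η
  obtain ⟨-, hησ, hησX⟩ := mem_filter.1 hη
  have : η ∪ σ ⊆ τ₀ := hmax _ hησX (sdiff_le_iff'.1 hσ₀η)
  rw [← disjoint_iff_inter_eq_empty] at hησ
  exact subset_sdiff.2 ⟨subset_union_left.trans this, hησ⟩

lemma sdiff_interval_iff_union_interval {σ₀ τ₀ σ η : Finset V} (hησ : Disjoint η σ)
    (hσ : σ ⊆ τ₀) :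
    (σ₀ \ σ ⊆ η ∧ η ⊆ τ₀ \ σ) ↔ (σ₀ ⊆ η ∪ σ ∧ η ∪ σ ⊆ τ₀) := by
  rw [sdiff_le_iff', subset_sdiff, union_subset_iff]
  tauto

lemma link_filter_of_subset {X : Finset (Finset V)} {σ₀ τ₀ σ : Finset V} (hσ : σ ⊆ τ₀) :
    link (X.filter fun η => ¬(σ₀ ⊆ η ∧ η ⊆ τ₀)) σ =
      (link X σ).filter fun η => ¬(σ₀ \ σ ⊆ η ∧ η ⊆ τ₀ \ σ) := by
  ext η
  simp only [link, mem_filter]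
  by_cases hησ : η ∩ σ = ∅
  · rw [sdiff_interval_iff_union_interval (disjoint_iff_inter_eq_empty.2 hησ) hσ]
    have : σ₀ ⊆ η ∧ η ⊆ τ₀ → σ₀ ⊆ η ∪ σ ∧ η ∪ σ ⊆ τ₀ :=
      fun ⟨hσ₀η, hητ₀⟩ => ⟨hσ₀η.trans subset_union_left, union_subset hητ₀ hσ⟩
    tauto
  · simp only [hησ, false_and, and_false]

lemma link_filter_of_not_subset {X : Finset (Finset V)} {σ₀ τ₀ σ : Finset V}
    (hmax : ∀ η ∈ X, σ₀ ⊆ η → η ⊆ τ₀) (hσ : ¬σ ⊆ τ₀) :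
    link (X.filter fun η => ¬(σ₀ ⊆ η ∧ η ⊆ τ₀)) σ = link X σ := by
  ext η
  simp only [link, mem_filter]
  have hστ₀ : ¬η ∪ σ ⊆ τ₀ := fun h => hσ (subset_union_right.trans h)
  have hσ₀ : η ∪ σ ∈ X → ¬σ₀ ⊆ η :=
    fun hησX h => hστ₀ (hmax _ hησX (h.trans subset_union_left))
  tauto

lemma ElemCollapse.link {d : ℕ} {X Y : Finset (Finset V)} (h : ElemCollapse d X Y)
    (hX : IsSimplicialComplex X) (σ : Finset V) :
    link Y σ = link X σ ∨ ElemCollapse d (link X σ) (link Y σ) := by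
  obtain ⟨σ₀, τ₀, hfree, hcard, rfl⟩ := h
  by_cases hσ : σ ⊆ τ₀
  · exact .inr ⟨σ₀ \ σ, τ₀ \ σ, hfree.link_sdiff hX hσ,
      (card_le_card sdiff_subset).trans hcard, link_filter_of_subset hσ⟩
  · exact .inl (link_filter_of_not_subset hfree.2.2.2 hσ)

lemma Collapsible.link {d : ℕ} {X : Finset (Finset V)} (h : Collapsible d X)
    (hX : IsSimplicialComplex X) (σ : Finset V) : Collapsible d (link X σ) := by
  induction h using Relation.ReflTransGen.head_induction_on with
  | refl => exact .refl
  | head hXY _ ih =>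
    have hlinkY := ih (hXY.isSimplicialComplex hX)
    rcases hXY.link hX σ with heq | hstep
    · rwa [← heq]
    · exact .head hstep hlinkY

end Collapses

theorem collapseNum_link_le_general {V : Type*} [DecidableEq V]
    (X : Finset (Finset V)) (hX : IsSimplicialComplex X)
    (σ : Finset V) :
    collapseNum (link X σ) ≤ collapseNum X :=
  Nat.sInf_le ((collapsible_collapseNum X).link hX σ)

/-- For any face `σ ∈ X`, `C(lk(X, σ)) ≤ C(X)`. -/
theorem collapseNum_link_le {V : Type*} [DecidableEq V]
    (X : Finset (Finset V)) (hX : IsSimplicialComplex X)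
    (σ : Finset V) (hσ : σ ∈ X) :
    collapseNum (link X σ) ≤ collapseNum X :=
  collapseNum_link_le_general X hX σ

end PaperKL
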